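/- arXiv:2605.06854 — 3 statements merged into one kernel-verified Lean document; each statement's English description precedes it below -/
import Mathlib

section
/- Let K ⊆ ℝ^N be a nonempty compact convex set. Then there exists a Lebesgue-null set N₀ ⊆ ℝ^N such that for every c ∈ ℝ^N \ N₀, the set argmin_{x ∈ K} ⟨c, x⟩ is a singleton whose unique element is an extreme point of K. -/
/-!
Let `h c = min_{x ∈ K} ⟪c, x⟫`. As a minimum of linear functions of `c` whose slopes are bounded
by `max_{x ∈ K} ‖x‖`, `h` is Lipschitz, hence differentiable off a null set by Rademacher's
theorem. If `y` minimizes `⟪c, ·⟫` on `K`, then `c' ↦ ⟪c', y⟫ - h c'` is nonnegative and vanishes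
at `c`, so where `h` is differentiable its gradient is `y`: the minimizer is unique. A unique
minimizer of a linear functional is an exposed, hence extreme, point.
-/

open MeasureTheory Set
open scoped RealInnerProductSpace

theorem mem_extremePoints_of_setOf_isMinOn_eq_singleton {𝕜 E : Type*} [TopologicalSpace 𝕜]
    [Ring 𝕜] [LinearOrder 𝕜] [IsStrictOrderedRing 𝕜] [IsTopologicalAddGroup 𝕜] [AddCommGroup E]
    [TopologicalSpace E] [Module 𝕜 E] {K : Set E} {l : StrongDual 𝕜 E} {x : E}
    (h : {y | y ∈ K ∧ IsMinOn l K y} = {x}) : x ∈ K.extremePoints 𝕜 := by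
  have hexposed : (-l).toExposed K = {x} := by
    rw [← h]
    ext y
    simp [ContinuousLinearMap.toExposed, isMinOn_iff]
  exact (hexposed ▸ ContinuousLinearMap.toExposed.isExposed).isExtreme.mem_extremePoints

section MinInner

variable {E : Type*} [NormedAddCommGroup E] [InnerProductSpace ℝ E] {K : Set E} {c y : E}

noncomputable def minInner (K : Set E) (c : E) : ℝ :=
  sInf ((⟪c, ·⟫) '' K)

theorem exists_isMinOn_inner (hK : IsCompact K) (hne : K.Nonempty) (c : E) :
    ∃ x ∈ K, IsMinOn (⟪c, ·⟫) K x :=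
  hK.exists_isMinOn hne (by fun_prop)

theorem minInner_eq_of_isMinOn (hy : y ∈ K) (hmin : IsMinOn (⟪c, ·⟫) K y) :
    minInner K c = ⟪c, y⟫ :=
  IsLeast.csInf_eq ⟨mem_image_of_mem _ hy, by rintro _ ⟨z, hz, rfl⟩; exact hmin hz⟩

theorem minInner_le_inner (hK : IsCompact K) (hy : y ∈ K) : minInner K c ≤ ⟪c, y⟫ :=
  csInf_le (hK.bddBelow_image (by fun_prop)) (mem_image_of_mem _ hy)

theorem lipschitzWith_minInner (hK : IsCompact K) (hne : K.Nonempty) {R : ℝ}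
    (hR : ∀ x ∈ K, ‖x‖ ≤ R) : LipschitzWith R.toNNReal (minInner K) := by
  refine LipschitzWith.of_le_add_mul' R fun c c' => ?_
  obtain ⟨x, hx, hmin⟩ := exists_isMinOn_inner hK hne c'
  calc minInner K c ≤ ⟪c, x⟫ := minInner_le_inner hK hx
    _ = ⟪c', x⟫ + ⟪c - c', x⟫ := by rw [inner_sub_left]; ring
    _ ≤ minInner K c' + ‖c - c'‖ * ‖x‖ := by
      rw [minInner_eq_of_isMinOn hx hmin]; gcongr; exact real_inner_le_norm _ _
    _ ≤ minInner K c' + R * dist c c' := by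
      rw [dist_eq_norm, mul_comm R]; gcongr; exact hR x hx

theorem HasFDerivAt.minInner_eq_innerSL {L : E →L[ℝ] ℝ} (hK : IsCompact K)
    (hL : HasFDerivAt (minInner K) L c) (hy : y ∈ K) (hmin : IsMinOn (⟪c, ·⟫) K y) :
    L = innerSL ℝ y := by
  have hgap : IsLocalMin (fun c' => innerSL ℝ y c' - minInner K c') c := by
    refine Filter.Eventually.of_forall fun c' => ?_
    have hle := minInner_le_inner (c := c') hK hy
    simp only [innerSL_apply_apply, minInner_eq_of_isMinOn hy hmin, real_inner_comm _ y]
    linarith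
  exact (sub_eq_zero.1 (hgap.hasFDerivAt_eq_zero ((innerSL ℝ y).hasFDerivAt.sub hL))).symm

theorem setOf_isMinOn_inner_eq_singleton (hK : IsCompact K) {x : E}
    (hc : DifferentiableAt ℝ (minInner K) c) (hx : x ∈ K) (hmin : IsMinOn (⟪c, ·⟫) K x) :
    {y | y ∈ K ∧ IsMinOn (⟪c, ·⟫) K y} = {x} := by
  refine Set.eq_singleton_iff_unique_mem.2 ⟨⟨hx, hmin⟩, fun y ⟨hy, hymin⟩ => ?_⟩
  rw [← innerSL_inj (𝕜 := ℝ), ← hc.hasFDerivAt.minInner_eq_innerSL hK hy hymin,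
    ← hc.hasFDerivAt.minInner_eq_innerSL hK hx hmin]

end MinInner

theorem generic_linear_functional_exposes_extreme_point_general {N : ℕ}
    (K : Set (EuclideanSpace ℝ (Fin N))) (hne : K.Nonempty)
    (hcpt : IsCompact K) :
    ∃ N₀ : Set (EuclideanSpace ℝ (Fin N)), volume N₀ = 0 ∧
      ∀ c ∉ N₀, ∃ x : EuclideanSpace ℝ (Fin N),
        {y | y ∈ K ∧ ∀ z ∈ K, (inner ℝ c y : ℝ) ≤ inner ℝ c z} = {x} ∧
        x ∈ Set.extremePoints ℝ K := by
  obtain ⟨R, hR⟩ := hcpt.isBounded.exists_norm_le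
  refine ⟨{c | ¬DifferentiableAt ℝ (minInner K) c},
    ae_iff.1 (lipschitzWith_minInner hcpt hne hR).ae_differentiableAt, fun c hc => ?_⟩
  obtain ⟨x, hx, hmin⟩ := exists_isMinOn_inner hcpt hne c
  have hunique := setOf_isMinOn_inner_eq_singleton hcpt (not_not.1 hc) hx hmin
  simp only [isMinOn_iff] at hunique
  exact ⟨x, hunique, mem_extremePoints_of_setOf_isMinOn_eq_singleton (l := innerSL ℝ c) hunique⟩

/-- for a nonempty compact convex `K ⊆ ℝ^N` there is a Lebesgue
null set `N₀` such that for every `c ∉ N₀`, the minimizers of `⟨c, ·⟩` over `K`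
form a singleton whose element is an extreme point of `K`. -/
theorem generic_linear_functional_exposes_extreme_point {N : ℕ}
    (K : Set (EuclideanSpace ℝ (Fin N))) (hne : K.Nonempty)
    (hcpt : IsCompact K) (hconv : Convex ℝ K) :
    ∃ N₀ : Set (EuclideanSpace ℝ (Fin N)), volume N₀ = 0 ∧
      ∀ c ∉ N₀, ∃ x : EuclideanSpace ℝ (Fin N),
        {y | y ∈ K ∧ ∀ z ∈ K, (inner ℝ c y : ℝ) ≤ inner ℝ c z} = {x} ∧
        x ∈ Set.extremePoints ℝ K :=
  generic_linear_functional_exposes_extreme_point_general K hne hcpt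
end

section
/- With ι as above, for every w ∈ ℝ and u ∈ ℝ^{n+1}, ι(w² u^{⊗2d}) = (w u^{⊗d}) ∨ (w u^{⊗d}), where u^{⊗2d} is expanded in the basis c_γ via u^{⊗2d} = Σ_γ u^γ c_γ and u^{⊗d} = Σ_α u^α b_α. -/
/-- Multi-indices of total degree `d` in `n+1` variables. -/
def Dd (n d : ℕ) := {α : Fin (n + 1) → Fin (d + 1) // ∑ i, (α i : ℕ) = d}

/-- Multi-indices of total degree `2d` in `n+1` variables. -/
def Gg (n d : ℕ) := {γ : Fin (n + 1) → Fin (2 * d + 1) // ∑ i, (γ i : ℕ) = 2 * d}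

instance (n d : ℕ) : DecidableEq (Dd n d) := by unfold Dd; infer_instance
instance (n d : ℕ) : Fintype (Dd n d) := by unfold Dd; infer_instance
instance (n d : ℕ) : Fintype (Gg n d) := by unfold Gg; infer_instance

/-- The sum `α + β` of an unordered pair `{α, β}` of degree-`d` multi-indices. -/
def sadd (n d : ℕ) : Sym2 (Dd n d) → (Fin (n + 1) → ℕ) :=
  Sym2.lift ⟨fun a b => fun i => (a.1 i : ℕ) + (b.1 i : ℕ),
    fun _ _ => funext fun _ => Nat.add_comm _ _⟩

/-! The coefficient of `b_α ∨ b_β` in `ι(w² u^{⊗2d})` collects the single term `γ = α + β`, whose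
coefficient `w² u^{α+β}` times the factor `2 - δ_{α,β}` of `ι(c_γ)` is the coefficient of
`b_α ∨ b_β` in `(w u^{⊗d}) ∨ (w u^{⊗d})`. -/

theorem sum_sadd (n d : ℕ) (p : Sym2 (Dd n d)) : ∑ i, sadd n d p i = 2 * d := by
  induction p using Sym2.ind with
  | _ a b => simp [sadd, Finset.sum_add_distrib, a.2, b.2, two_mul]

theorem sadd_lt (n d : ℕ) (p : Sym2 (Dd n d)) (i : Fin (n + 1)) : sadd n d p i < 2 * d + 1 :=
  Nat.lt_succ_of_le <| sum_sadd n d p ▸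
    Finset.single_le_sum (fun _ _ => Nat.zero_le _) (Finset.mem_univ i)

def saddGg (n d : ℕ) (p : Sym2 (Dd n d)) : Gg n d :=
  ⟨fun i => ⟨sadd n d p i, sadd_lt n d p i⟩, by simpa using sum_sadd n d p⟩

theorem sadd_eq_iff (n d : ℕ) (p : Sym2 (Dd n d)) (γ : Gg n d) :
    (sadd n d p = fun i => (γ.1 i : ℕ)) ↔ γ = saddGg n d p := by
  constructor
  · intro h
    exact Subtype.ext <| funext fun i => Fin.ext (congrFun h i).symm
  · rintro rfl
    rfl

theorem iota_of_square_general (n d : ℕ)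
    {M : Type*} [AddCommGroup M] [Module ℝ M]
    (B : Module.Basis (Sym2 (Dd n d)) ℝ M)
    (ι : (Gg n d →₀ ℝ) →ₗ[ℝ] M)
    (hι : ∀ (γ : Gg n d) (p : Sym2 (Dd n d)),
      B.repr (ι (Finsupp.single γ 1)) p =
        if sadd n d p = (fun i => (γ.1 i : ℕ)) then
          (if p.IsDiag then 1 else 2) else 0)
    (w : ℝ) (u : Fin (n + 1) → ℝ) :
    ι (∑ γ : Gg n d, (w ^ 2 * ∏ i, u i ^ (γ.1 i : ℕ)) • Finsupp.single γ 1) =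
      ∑ p : Sym2 (Dd n d),
        (w ^ 2 * (∏ i, u i ^ sadd n d p i) * (if p.IsDiag then 1 else 2)) • B p := by
  classical
  apply B.repr.injective
  ext p
  simp only [map_sum, map_smul, Finsupp.coe_finsetSum, Finset.sum_apply, Finsupp.smul_apply,
    smul_eq_mul, hι, sadd_eq_iff, B.repr_self, Finsupp.single_apply, mul_ite, mul_one, mul_zero]
  rw [Fintype.sum_ite_eq', Fintype.sum_ite_eq']
  rfl

/-- with `ι` defined on the basis by
`ι(c_γ) = ∑_{α+β=γ, α≤β} (2 − δ_{α,β}) b_α ∨ b_β`, for every `w ∈ ℝ` and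
`u ∈ ℝ^{n+1}` one has `ι(w² u^{⊗2d}) = (w u^{⊗d}) ∨ (w u^{⊗d})`, where
`u^{⊗2d} = ∑_γ u^γ c_γ` and
`(w u^{⊗d}) ∨ (w u^{⊗d}) = ∑_p w² u^{α+β} (2 − δ_{α,β}) b_α ∨ b_β`
(the sum over unordered pairs `p = {α, β}`). -/
theorem iota_of_square (n d : ℕ) (hd : 0 < d)
    {M : Type*} [AddCommGroup M] [Module ℝ M]
    (B : Module.Basis (Sym2 (Dd n d)) ℝ M)
    (ι : (Gg n d →₀ ℝ) →ₗ[ℝ] M)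
    (hι : ∀ (γ : Gg n d) (p : Sym2 (Dd n d)),
      B.repr (ι (Finsupp.single γ 1)) p =
        if sadd n d p = (fun i => (γ.1 i : ℕ)) then
          (if p.IsDiag then 1 else 2) else 0)
    (w : ℝ) (u : Fin (n + 1) → ℝ) :
    ι (∑ γ : Gg n d, (w ^ 2 * ∏ i, u i ^ (γ.1 i : ℕ)) • Finsupp.single γ 1) =
      ∑ p : Sym2 (Dd n d),
        (w ^ 2 * (∏ i, u i ^ sadd n d p i) * (if p.IsDiag then 1 else 2)) • B p :=
  iota_of_square_general n d B ι hι w u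
end

section
/- Let ψ : Sym²(Sym^d(ℝ^{n+1})) → Sym(N) with N = binom(n+d, d) be the isomorphism sending b_α ∨ b_β to (1/2)(E_{α,β} + E_{β,α}). Then ψ(im(ι)) equals the generalized multivariate Hankel subspace H := {X ∈ Sym(N) : X_{α,β} = X_{α′,β′} whenever α + β = α′ + β′}, where ι is the map ι(c_γ) = Σ_{α+β=γ, α≤β} (2 − δ_{α,β}) b_α ∨ b_β. -/
open Matrix

/-- `ψ(b_α ∨ b_β) = (1/2)(E_{α,β} + E_{β,α})`, as a function of the unordered
pair `{α, β}`. -/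
noncomputable def psiBasis (n d : ℕ) :
    Sym2 (Dd n d) → Matrix (Dd n d) (Dd n d) ℝ :=
  Sym2.lift ⟨fun a b =>
      (2 : ℝ)⁻¹ • (Matrix.single a b 1 + Matrix.single b a 1),
    fun a b => by simp [add_comm]⟩

/-- The generalized multivariate Hankel subspace: matrices indexed by degree-`d`
multi-indices with `X_{α,β} = X_{α′,β′}` whenever `α + β = α′ + β′`. -/
def hankel (n d : ℕ) : Submodule ℝ (Matrix (Dd n d) (Dd n d) ℝ) where
  carrier := {X | ∀ a b a' b' : Dd n d,
    ((fun i => (a.1 i : ℕ) + (b.1 i : ℕ)) = fun i => (a'.1 i : ℕ) + (b'.1 i : ℕ)) →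
      X a b = X a' b'}
  add_mem' := by
    intro X Y hX hY a b a' b' h
    simp only [Matrix.add_apply, hX a b a' b' h, hY a b a' b' h]
  zero_mem' := by intro a b a' b' h; rfl
  smul_mem' := by
    intro c X hX a b a' b' h
    simp only [Matrix.smul_apply, hX a b a' b' h]

/-!
On basis vectors, `ψ (ι c_γ)` is the `0/1` matrix supported on `{(α, β) | α + β = γ}`: the weight
`2 - δ_{α,β}` of `ι` cancels the factor `1/2` of `ψ`. So `ψ (ι x)` has entry `x_{α+β}` at `(α, β)`,
and a matrix is of this form exactly when its entries depend only on `α + β`.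
-/

instance (n d : ℕ) : DecidableEq (Gg n d) := by unfold Gg; infer_instance

def Dd.add {n d : ℕ} (a b : Dd n d) : Gg n d :=
  ⟨fun i => ⟨(a.1 i : ℕ) + (b.1 i : ℕ), by have := (a.1 i).isLt; have := (b.1 i).isLt; omega⟩, by
    simp only [Finset.sum_add_distrib, a.2, b.2]; ring⟩

lemma Dd.add_eq_iff {n d : ℕ} (a b : Dd n d) (γ : Gg n d) :
    a.add b = γ ↔ sadd n d s(a, b) = fun i => (γ.1 i : ℕ) :=
  ⟨fun h => h ▸ rfl, fun h => Subtype.ext (funext fun i => Fin.ext (congrFun h i))⟩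

lemma Dd.add_eq_add_iff {n d : ℕ} (a b a' b' : Dd n d) :
    a.add b = a'.add b' ↔
      (fun i => (a.1 i : ℕ) + (b.1 i : ℕ)) = fun i => (a'.1 i : ℕ) + (b'.1 i : ℕ) :=
  Dd.add_eq_iff a b (a'.add b')

lemma mem_hankel_iff_factorsThrough {n d : ℕ} (X : Matrix (Dd n d) (Dd n d) ℝ) :
    X ∈ hankel n d ↔
      Function.FactorsThrough (fun ab : Dd n d × Dd n d => X ab.1 ab.2)
        (fun ab => ab.1.add ab.2) := by
  simp only [Function.FactorsThrough, Prod.forall, Dd.add_eq_add_iff]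
  rfl

lemma entry_eq_coeff_add_of_single {n d : ℕ}
    {Φ : (Gg n d →₀ ℝ) →ₗ[ℝ] Matrix (Dd n d) (Dd n d) ℝ}
    (hΦ : ∀ γ a b, Φ (Finsupp.single γ 1) a b = if a.add b = γ then 1 else 0)
    (x : Gg n d →₀ ℝ) (a b : Dd n d) :
    Φ x a b = x (a.add b) := by
  have h : Matrix.entryLinearMap ℝ ℝ a b ∘ₗ Φ = Finsupp.lapply (a.add b) :=
    Finsupp.lhom_ext' fun γ => LinearMap.ext_ring <| by
      simp [hΦ, Finsupp.single_apply, eq_comm]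
  exact LinearMap.congr_fun h x

lemma range_eq_hankel {n d : ℕ} {Φ : (Gg n d →₀ ℝ) →ₗ[ℝ] Matrix (Dd n d) (Dd n d) ℝ}
    (hΦ : ∀ γ a b, Φ (Finsupp.single γ 1) a b = if a.add b = γ then 1 else 0) :
    LinearMap.range Φ = hankel n d := by
  have hΦ_apply := entry_eq_coeff_add_of_single hΦ
  apply le_antisymm
  · rintro X ⟨x, rfl⟩
    rw [mem_hankel_iff_factorsThrough]
    intro ab ab' h
    simp only [hΦ_apply, h]
  · intro X hX
    rw [mem_hankel_iff_factorsThrough] at hX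
    refine ⟨Finsupp.equivFunOnFinite.symm
      (Function.extend (fun ab : Dd n d × Dd n d => ab.1.add ab.2) (fun ab => X ab.1 ab.2) 0), ?_⟩
    ext a b
    rw [hΦ_apply, Finsupp.coe_equivFunOnFinite_symm, hX.extend_apply 0 (a, b)]

lemma psiBasis_apply {n d : ℕ} (a b c e : Dd n d) :
    psiBasis n d s(c, e) a b =
      2⁻¹ * ((if c = a ∧ e = b then 1 else 0) + (if e = a ∧ c = b then 1 else 0)) := by
  simp only [psiBasis, Sym2.lift_mk, Matrix.smul_apply, Matrix.add_apply, Matrix.single_apply,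
    smul_eq_mul]

lemma iotaWeight_mul_psiBasis_apply {n d : ℕ} (p : Sym2 (Dd n d)) (a b : Dd n d) :
    (if p.IsDiag then 1 else 2) * psiBasis n d p a b = if p = s(a, b) then 1 else 0 := by
  induction p using Sym2.ind with
  | _ c e =>
    simp only [psiBasis_apply, Sym2.mk_isDiag_iff, Sym2.eq_iff]
    by_cases hce : c = e
    · subst hce
      simp only [and_comm (a := c = b), or_self, if_true]
      split_ifs <;> norm_num
    · simp only [hce, if_false]
      split_ifs <;> simp_all
      tauto

lemma psi_iota_single_apply {n d : ℕ} {M : Type*} [AddCommMonoid M] [Module ℝ M]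
    {B : Module.Basis (Sym2 (Dd n d)) ℝ M} {ι : (Gg n d →₀ ℝ) →ₗ[ℝ] M}
    (hι : ∀ (γ : Gg n d) (p : Sym2 (Dd n d)),
      B.repr (ι (Finsupp.single γ 1)) p =
        if sadd n d p = (fun i => (γ.1 i : ℕ)) then (if p.IsDiag then 1 else 2) else 0)
    {ψ : M →ₗ[ℝ] Matrix (Dd n d) (Dd n d) ℝ} (hψ : ∀ p : Sym2 (Dd n d), ψ (B p) = psiBasis n d p)
    (γ : Gg n d) (a b : Dd n d) :
    ψ (ι (Finsupp.single γ 1)) a b = if a.add b = γ then 1 else 0 := by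
  have hψ_eq : ψ = B.constr ℝ (psiBasis n d) := B.ext fun p => by rw [hψ, B.constr_basis]
  rw [hψ_eq, B.constr_apply_fintype ℝ, Matrix.sum_apply]
  calc ∑ p, (B.equivFun (ι (Finsupp.single γ 1)) p • psiBasis n d p) a b
      = ∑ p, if sadd n d p = (fun i => (γ.1 i : ℕ)) then
          (if p = s(a, b) then 1 else 0) else 0 := by
        refine Finset.sum_congr rfl fun p _ => ?_
        rw [Matrix.smul_apply, B.equivFun_apply, hι, smul_eq_mul, ite_mul, zero_mul,
          iotaWeight_mul_psiBasis_apply]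
    _ = if a.add b = γ then 1 else 0 := by
        rw [Fintype.sum_eq_single s(a, b) fun p hp => by simp [hp]]
        simp [Dd.add_eq_iff]

theorem psi_image_iota_eq_hankel_general (n d : ℕ)
    {M : Type*} [AddCommGroup M] [Module ℝ M]
    (B : Module.Basis (Sym2 (Dd n d)) ℝ M)
    (ι : (Gg n d →₀ ℝ) →ₗ[ℝ] M)
    (hι : ∀ (γ : Gg n d) (p : Sym2 (Dd n d)),
      B.repr (ι (Finsupp.single γ 1)) p =
        if sadd n d p = (fun i => (γ.1 i : ℕ)) then
          (if p.IsDiag then 1 else 2) else 0)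
    (ψ : M →ₗ[ℝ] Matrix (Dd n d) (Dd n d) ℝ)
    (hψ : ∀ p : Sym2 (Dd n d), ψ (B p) = psiBasis n d p) :
    Submodule.map ψ (LinearMap.range ι) = hankel n d := by
  rw [← LinearMap.range_comp]
  exact range_eq_hankel (psi_iota_single_apply hι hψ)

/-- `ψ(im ι)` equals the generalized multivariate Hankel
subspace, where `ι(c_γ) = ∑_{α+β=γ, α≤β} (2 − δ_{α,β}) b_α ∨ b_β` and
`ψ(b_α ∨ b_β) = (1/2)(E_{α,β} + E_{β,α})`. -/
theorem psi_image_iota_eq_hankel (n d : ℕ) (hd : 0 < d)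
    {M : Type*} [AddCommGroup M] [Module ℝ M]
    (B : Module.Basis (Sym2 (Dd n d)) ℝ M)
    (ι : (Gg n d →₀ ℝ) →ₗ[ℝ] M)
    (hι : ∀ (γ : Gg n d) (p : Sym2 (Dd n d)),
      B.repr (ι (Finsupp.single γ 1)) p =
        if sadd n d p = (fun i => (γ.1 i : ℕ)) then
          (if p.IsDiag then 1 else 2) else 0)
    (ψ : M →ₗ[ℝ] Matrix (Dd n d) (Dd n d) ℝ)
    (hψ : ∀ p : Sym2 (Dd n d), ψ (B p) = psiBasis n d p) :
    Submodule.map ψ (LinearMap.range ι) = hankel n d :=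
  psi_image_iota_eq_hankel_general n d B ι hι ψ hψ
end
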